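/- Let T be an associative trialgebra over a field K of characteristic zero, let φ ∈ Γ(T) be an element of the centroid and let d ∈ Der(T) be a derivation. Then the commutator [φ,d] = φ∘d − d∘φ belongs to the centroid Γ(T), i.e. [φ,d](x•y) = ([φ,d](x))•y = x•([φ,d](y)) for all x,y ∈ T and each product • ∈ {⊣,⊢,⊥}. -/
import Mathlib


variable {K T : Type*} [Field K] [CharZero K] [AddCommGroup T] [Module K T]

/-- An associative trialgebra structure: three bilinear products `l` (⊣), `r` (⊢), `m` (⊥)
satisfying the eleven trialgebra axioms. -/
structure IsTrialgebra (l r m : T →ₗ[K] T →ₗ[K] T) : Prop where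
  ax1 : ∀ x y z : T, l (l x y) z = l x (l y z)
  ax2 : ∀ x y z : T, l (l x y) z = l x (r y z)
  ax3 : ∀ x y z : T, l (r x y) z = r x (l y z)
  ax4 : ∀ x y z : T, r (l x y) z = r x (r y z)
  ax5 : ∀ x y z : T, r (r x y) z = r x (r y z)
  ax6 : ∀ x y z : T, l (l x y) z = l x (m y z)
  ax7 : ∀ x y z : T, l (m x y) z = m x (l y z)
  ax8 : ∀ x y z : T, m (l x y) z = m x (r y z)
  ax9 : ∀ x y z : T, m (r x y) z = r x (m y z)
  ax10 : ∀ x y z : T, r (m x y) z = r x (r y z)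
  ax11 : ∀ x y z : T, m (m x y) z = m x (m y z)

/-- A derivation of the trialgebra: the Leibniz rule holds for each of the three products. -/
def IsDeriv (l r m : T →ₗ[K] T →ₗ[K] T) (d : T →ₗ[K] T) : Prop :=
  ∀ x y : T,
    d (l x y) = l (d x) y + l x (d y) ∧
    d (r x y) = r (d x) y + r x (d y) ∧
    d (m x y) = m (d x) y + m x (d y)

/-- An element of the centroid of the trialgebra. -/
def IsCentroidElem (l r m : T →ₗ[K] T →ₗ[K] T) (ψ : T →ₗ[K] T) : Prop :=
  ∀ x y : T,
    (ψ (l x y) = l (ψ x) y ∧ ψ (l x y) = l x (ψ y)) ∧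
    (ψ (r x y) = r (ψ x) y ∧ ψ (r x y) = r x (ψ y)) ∧
    (ψ (m x y) = m (ψ x) y ∧ ψ (m x y) = m x (ψ y))

/-- For `φ` in the centroid and `d` a derivation of an associative trialgebra, the
commutator [φ,d] = φ∘d − d∘φ belongs to the centroid. -/
theorem statement5 (l r m : T →ₗ[K] T →ₗ[K] T) (h : IsTrialgebra l r m)
    (φ d : T →ₗ[K] T) (hφ : IsCentroidElem l r m φ) (hd : IsDeriv l r m d) :
    IsCentroidElem l r m (φ ∘ₗ d - d ∘ₗ φ) := by
  have hdl : ∀ x y : T, d (l x y) = l (d x) y + l x (d y) := fun x y => (hd x y).1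
  have hdr : ∀ x y : T, d (r x y) = r (d x) y + r x (d y) := fun x y => (hd x y).2.1
  have hdm : ∀ x y : T, d (m x y) = m (d x) y + m x (d y) := fun x y => (hd x y).2.2
  have hl1 : ∀ x y : T, φ (l x y) = l (φ x) y := fun x y => (hφ x y).1.1
  have hl2 : ∀ x y : T, φ (l x y) = l x (φ y) := fun x y => (hφ x y).1.2
  have hr1 : ∀ x y : T, φ (r x y) = r (φ x) y := fun x y => (hφ x y).2.1.1
  have hr2 : ∀ x y : T, φ (r x y) = r x (φ y) := fun x y => (hφ x y).2.1.2
  have hm1 : ∀ x y : T, φ (m x y) = m (φ x) y := fun x y => (hφ x y).2.2.1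
  have hm2 : ∀ x y : T, φ (m x y) = m x (φ y) := fun x y => (hφ x y).2.2.2
  refine fun x y => ⟨⟨?_, ?_⟩, ⟨?_, ?_⟩, ⟨?_, ?_⟩⟩ <;>
    simp only [LinearMap.sub_apply, LinearMap.comp_apply, map_sub, map_add,
      hdl, hdr, hdm] <;>
  first
    | (simp only [hl1, hr1, hm1, hdl, hdr, hdm]; abel1)
    | (simp only [hl2, hr2, hm2, hdl, hdr, hdm]; abel1)
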